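/- arXiv:2006.16540 — 6 statements merged into one kernel-verified Lean document; each statement's English description precedes it below -/
import Mathlib

section
/- Let X ∈ ℝ^{n₀×n} have rank n with n ≤ n₀, let P = X(XᵀX)⁻¹Xᵀ be the orthogonal projection onto the column space of X, let J₀ ∈ ℝ^{n₀×n₀} be arbitrary, and set J_∞ = J₀(I − P) + P. Then: (i) every vector in the column space of X is fixed by J_∞, so 1 is an eigenvalue of J_∞ with (geometric) multiplicity at least n; (ii) if moreover the operator norm ‖J₀‖_op < 1, then every complex eigenvalue λ of J_∞ with λ ≠ 1 satisfies |λ| < 1; in particular the eigenvalue 1 has multiplicity exactly n and 1 is the largest eigenvalue norm of J_∞. (This is the paper's Lemma 2 for a 2-layer network with activation σ(x)=αx trained on n examples in the NTK limit.) -/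
/-!
Write `P` for the projection onto the column space of `X`. Then `J∞ = J₀(1 - P) + P` satisfies
`J∞ P = P` and `(1 - P) J∞ = (1 - P) J₀ (1 - P)`. So for an eigenvector `v` of `J∞` either
`(1 - P) v = 0`, and then `v ∈ range P` with eigenvalue `1`, or `(1 - P) v` is an eigenvector of
`(1 - P) J₀` for the same eigenvalue, whose modulus is then at most `‖1 - P‖ ‖J₀‖ ≤ ‖J₀‖`.
When `‖J₀‖ < 1` the second case cannot produce the eigenvalue `1`, so the eigenspace of `1` is
exactly `range P = range X`, of dimension `rank X = n`.
-/

open Matrix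
open scoped Matrix.Norms.L2Operator

namespace Module.End

variable {R M : Type*} [CommRing R] [AddCommGroup M] [Module R M] {p : End R M}

lemma mul_one_sub_add_mul_of_isIdempotentElem (hp : IsIdempotentElem p) (a : End R M) :
    (a * (1 - p) + p) * p = p := by
  rw [add_mul, mul_assoc, hp.one_sub_mul_self, mul_zero, zero_add, hp.eq]

lemma range_le_eigenspace_one_of_isIdempotentElem (hp : IsIdempotentElem p) (a : End R M) :
    LinearMap.range p ≤ (a * (1 - p) + p).eigenspace 1 := by
  rintro _ ⟨v, rfl⟩
  rw [mem_eigenspace_iff, one_smul, ← mul_apply, mul_one_sub_add_mul_of_isIdempotentElem hp]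

lemma eigenspace_one_eq_range_of_isIdempotentElem (hp : IsIdempotentElem p) {a : End R M}
    (ha : ¬ a.HasEigenvalue 1) : (a * (1 - p) + p).eigenspace 1 = LinearMap.range p := by
  refine le_antisymm (fun v hv => ?_) (range_le_eigenspace_one_of_isIdempotentElem hp a)
  have hfix : a ((1 - p) v) = (1 - p) v := by
    rw [mem_eigenspace_iff, one_smul] at hv
    simp only [LinearMap.add_apply, mul_apply, LinearMap.sub_apply,
      Module.End.one_apply] at hv ⊢
    exact eq_sub_of_add_eq hv
  have hzero : (1 - p) v = 0 := by
    by_contra hne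
    exact ha (hasEigenvalue_of_hasEigenvector ⟨mem_eigenspace_iff.mpr (by rwa [one_smul]), hne⟩)
  exact ⟨v, (sub_eq_zero.mp hzero).symm⟩

lemma eq_one_or_hasEigenvalue_of_isIdempotentElem [IsDomain R] [Module.IsTorsionFree R M]
    (hp : IsIdempotentElem p) {a : End R M} {μ : R}
    (hμ : (a * (1 - p) + p).HasEigenvalue μ) : μ = 1 ∨ ((1 - p) * a).HasEigenvalue μ := by
  obtain ⟨v, hv⟩ := hμ.exists_hasEigenvector
  have hjv := hv.apply_eq_smul
  by_cases hw : (1 - p) v = 0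
  · left
    have hpv : p v = v := (sub_eq_zero.mp hw).symm
    have hsmul : (μ - 1) • v = 0 := by
      rw [sub_smul, one_smul, ← hjv]
      simp [hw, hpv]
    exact sub_eq_zero.mp ((smul_eq_zero.mp hsmul).resolve_right hv.2)
  · right
    refine hasEigenvalue_of_hasEigenvector ⟨?_, hw⟩
    have hslide : (1 - p) * a * (1 - p) = (1 - p) * (a * (1 - p) + p) := by
      rw [mul_add, hp.one_sub_mul_self, add_zero, mul_assoc]
    rw [mem_eigenspace_iff, ← mul_apply, hslide, mul_apply, hjv, map_smul]

end Module.End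

namespace EuclideanSpace

lemma norm_sq_eq_norm_sq_re_add_norm_sq_im {n : Type*} [Fintype n] (w : EuclideanSpace ℂ n) :
    ‖w‖ ^ 2 = ‖(EuclideanSpace.equiv n ℝ).symm fun i => (w i).re‖ ^ 2
      + ‖(EuclideanSpace.equiv n ℝ).symm fun i => (w i).im‖ ^ 2 := by
  simp only [EuclideanSpace.norm_sq_eq, ← Finset.sum_add_distrib, Complex.sq_norm,
    Complex.normSq_apply]
  simp [sq]

end EuclideanSpace

namespace Matrix

section ColumnProjection

variable {R m n : Type*} [CommRing R] [Fintype m] [Fintype n] [DecidableEq n]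

/-- Only meaningful when `XᵀX` is invertible: otherwise `(XᵀX)⁻¹ = 0` and so is this. -/
noncomputable def columnProjection (X : Matrix m n R) : Matrix m m R := X * (Xᵀ * X)⁻¹ * Xᵀ

variable {X : Matrix m n R}

lemma columnProjection_mul_self (hX : IsUnit (Xᵀ * X).det) : columnProjection X * X = X := by
  rw [columnProjection, Matrix.mul_assoc, Matrix.mul_assoc, nonsing_inv_mul _ hX, Matrix.mul_one]

lemma isIdempotentElem_columnProjection (hX : IsUnit (Xᵀ * X).det) :
    IsIdempotentElem (columnProjection X) := by
  calc columnProjection X * columnProjection X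
      = columnProjection X * X * (Xᵀ * X)⁻¹ * Xᵀ := by
        simp only [columnProjection, Matrix.mul_assoc]
    _ = columnProjection X := by rw [columnProjection_mul_self hX, columnProjection]

lemma transpose_columnProjection (X : Matrix m n R) :
    (columnProjection X)ᵀ = columnProjection X := by
  simp [columnProjection, transpose_nonsing_inv, Matrix.mul_assoc]

lemma isStarProjection_columnProjection [StarRing R] [TrivialStar R] (hX : IsUnit (Xᵀ * X).det) :
    IsStarProjection (columnProjection X) where
  isIdempotentElem := isIdempotentElem_columnProjection hX
  isSelfAdjoint := by
    rw [IsSelfAdjoint, star_eq_conjTranspose, conjTranspose_eq_transpose_of_trivial,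
      transpose_columnProjection]

lemma range_toLin'_columnProjection [DecidableEq m] (hX : IsUnit (Xᵀ * X).det) :
    LinearMap.range (toLin' (columnProjection X)) = LinearMap.range (toLin' X) := by
  apply le_antisymm
  · rw [columnProjection, Matrix.mul_assoc, toLin'_mul]
    exact LinearMap.range_comp_le_range _ _
  · conv_lhs => rw [← columnProjection_mul_self hX, toLin'_mul]
    exact LinearMap.range_comp_le_range _ _

end ColumnProjection

lemma isUnit_det_transpose_mul_self_of_rank_eq {R m n : Type*} [Field R] [LinearOrder R]
    [IsStrictOrderedRing R] [Fintype m] [Fintype n] [DecidableEq n] {X : Matrix m n R}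
    (hX : X.rank = Fintype.card n) : IsUnit (Xᵀ * X).det := by
  rw [← isUnit_iff_isUnit_det, ← mulVec_injective_iff_isUnit]
  have hsurj : Function.Surjective (Xᵀ * X).mulVecLin := by
    rw [← LinearMap.range_eq_top]
    apply Submodule.eq_top_of_finrank_eq
    rw [Module.finrank_fintype_fun_eq_card, ← hX, ← rank_transpose_mul_self X, rank]
  exact LinearMap.injective_iff_surjective.mpr hsurj

lemma norm_le_l2_opNorm_of_hasEigenvalue {𝕜 n : Type*} [RCLike 𝕜] [Fintype n] [DecidableEq n]
    {A : Matrix n n 𝕜} {μ : 𝕜} (hμ : Module.End.HasEigenvalue (toLin' A) μ) : ‖μ‖ ≤ ‖A‖ := by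
  obtain ⟨v, hv⟩ := hμ.exists_hasEigenvector
  set x := (EuclideanSpace.equiv n 𝕜).symm v
  have hx : 0 < ‖x‖ := norm_pos_iff.2 (by simpa [x] using hv.2)
  have hAx : A *ᵥ v = μ • v := by simpa using hv.apply_eq_smul
  have h := A.l2_opNorm_mulVec x
  rw [show (x : n → 𝕜) = v from rfl, hAx, map_smul, norm_smul] at h
  exact le_of_mul_le_mul_right h hx

lemma l2_opNorm_map_ofReal_le {m n : Type*} [Fintype m] [Fintype n] [DecidableEq n]
    (B : Matrix m n ℝ) : ‖B.map ((↑) : ℝ → ℂ)‖ ≤ ‖B‖ := by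
  rw [l2_opNorm_def]
  refine ContinuousLinearMap.opNorm_le_bound _ (norm_nonneg _) fun w => ?_
  change ‖(EuclideanSpace.equiv m ℂ).symm (B.map ((↑) : ℝ → ℂ) *ᵥ w)‖ ≤ ‖B‖ * ‖w‖
  set wRe := (EuclideanSpace.equiv n ℝ).symm fun j => (w j).re
  set wIm := (EuclideanSpace.equiv n ℝ).symm fun j => (w j).im
  have hsplit : ‖(EuclideanSpace.equiv m ℂ).symm (B.map ((↑) : ℝ → ℂ) *ᵥ w)‖ ^ 2
      = ‖(EuclideanSpace.equiv m ℝ).symm (B *ᵥ wRe)‖ ^ 2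
        + ‖(EuclideanSpace.equiv m ℝ).symm (B *ᵥ wIm)‖ ^ 2 := by
    rw [EuclideanSpace.norm_sq_eq_norm_sq_re_add_norm_sq_im]
    congr 3 <;> ext i <;> simp [wRe, wIm, mulVec, dotProduct, Complex.re_sum, Complex.im_sum]
  rw [← pow_le_pow_iff_left₀ (norm_nonneg _) (by positivity) two_ne_zero, hsplit]
  calc _ ≤ (‖B‖ * ‖wRe‖) ^ 2 + (‖B‖ * ‖wIm‖) ^ 2 := by gcongr <;> exact B.l2_opNorm_mulVec _
    _ = (‖B‖ * ‖w‖) ^ 2 := by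
      rw [mul_pow, mul_pow, mul_pow, EuclideanSpace.norm_sq_eq_norm_sq_re_add_norm_sq_im w]
      ring

lemma toLin'_mul_one_sub_add {R n : Type*} [CommRing R] [Fintype n] [DecidableEq n]
    (A P : Matrix n n R) : toLin' (A * (1 - P) + P) = toLin' A * (1 - toLin' P) + toLin' P := by
  change toLinAlgEquiv' _ = toLinAlgEquiv' A * (1 - toLinAlgEquiv' P) + toLinAlgEquiv' P
  simp only [map_add, map_mul, map_sub, map_one]

lemma range_toLin'_le_eigenspace_one {R n : Type*} [CommRing R] [Fintype n] [DecidableEq n]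
    {P : Matrix n n R} (hP : IsIdempotentElem P) (A : Matrix n n R) :
    LinearMap.range (toLin' P) ≤ Module.End.eigenspace (toLin' (A * (1 - P) + P)) 1 := by
  rw [toLin'_mul_one_sub_add]
  exact Module.End.range_le_eigenspace_one_of_isIdempotentElem (hP.map toLinAlgEquiv') _

lemma eigenspace_toLin'_one_eq_range {𝕜 n : Type*} [RCLike 𝕜] [Fintype n] [DecidableEq n]
    {A P : Matrix n n 𝕜} (hP : IsIdempotentElem P) (hA : ‖A‖ < 1) :
    Module.End.eigenspace (toLin' (A * (1 - P) + P)) 1 = LinearMap.range (toLin' P) := by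
  rw [toLin'_mul_one_sub_add]
  refine Module.End.eigenspace_one_eq_range_of_isIdempotentElem (hP.map toLinAlgEquiv') fun h => ?_
  simpa using (norm_le_l2_opNorm_of_hasEigenvalue h).trans_lt hA

lemma eq_one_or_norm_lt_one_of_hasEigenvalue_map_ofReal {n : Type*} [Fintype n] [DecidableEq n]
    {A P : Matrix n n ℝ} (hP : IsStarProjection P) (hA : ‖A‖ < 1) {μ : ℂ}
    (hμ : Module.End.HasEigenvalue (toLin' ((A * (1 - P) + P).map ((↑) : ℝ → ℂ))) μ) :
    μ = 1 ∨ ‖μ‖ < 1 := by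
  let f := Complex.ofRealHom.mapMatrix (m := n)
  have hJ : (A * (1 - P) + P).map ((↑) : ℝ → ℂ) = f A * (1 - f P) + f P := by
    change f (A * (1 - P) + P) = _
    simp only [map_add, map_mul, map_sub, map_one]
  rw [hJ, toLin'_mul_one_sub_add] at hμ
  refine (Module.End.eq_one_or_hasEigenvalue_of_isIdempotentElem
    ((hP.isIdempotentElem.map f).map toLinAlgEquiv') hμ).imp_right fun h => ?_
  have hB : (1 - toLin' (f P)) * toLin' (f A) = toLin' (((1 - P) * A).map ((↑) : ℝ → ℂ)) := by
    change _ = toLinAlgEquiv' (f ((1 - P) * A))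
    simp only [map_mul, map_sub, map_one]
    rfl
  calc ‖μ‖ ≤ ‖((1 - P) * A).map ((↑) : ℝ → ℂ)‖ := norm_le_l2_opNorm_of_hasEigenvalue (hB ▸ h)
    _ ≤ ‖(1 - P) * A‖ := l2_opNorm_map_ofReal_le _
    _ ≤ ‖1 - P‖ * ‖A‖ := l2_opNorm_mul _ _
    _ ≤ 1 * ‖A‖ := by gcongr; exact hP.one_sub.norm_le
    _ < 1 := by linarith

end Matrix

theorem jacobian_eigenvalue_one_linear_general (n₀ n : ℕ)
    (X : Matrix (Fin n₀) (Fin n) ℝ) (hX : X.rank = n)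
    (J₀ : Matrix (Fin n₀) (Fin n₀) ℝ) :
    ∀ P Jinf : Matrix (Fin n₀) (Fin n₀) ℝ,
      P = X * (Xᵀ * X)⁻¹ * Xᵀ →
      Jinf = J₀ * (1 - P) + P →
      ((∀ y : Fin n → ℝ, Jinf *ᵥ (X *ᵥ y) = X *ᵥ y) ∧
        n ≤ Module.finrank ℝ
          (Module.End.eigenspace (Matrix.toLin' Jinf) (1 : ℝ)) ∧
        (‖J₀‖ < 1 →
          (∀ μ : ℂ, μ ≠ 1 →
            Module.End.HasEigenvalue
              (Matrix.toLin' (Jinf.map (Complex.ofReal : ℝ → ℂ))) μ → ‖μ‖ < 1) ∧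
          Module.finrank ℝ
            (Module.End.eigenspace (Matrix.toLin' Jinf) (1 : ℝ)) = n ∧
          (∀ μ : ℂ,
            Module.End.HasEigenvalue
              (Matrix.toLin' (Jinf.map (Complex.ofReal : ℝ → ℂ))) μ → ‖μ‖ ≤ 1))) := by
  intro P Jinf hP hJinf
  have hXX : IsUnit (Xᵀ * X).det := isUnit_det_transpose_mul_self_of_rank_eq (by simpa using hX)
  replace hP : P = columnProjection X := hP
  subst hP hJinf
  have hrange := range_toLin'_columnProjection hXX
  have hfinrank : Module.finrank ℝ (LinearMap.range (toLin' X)) = n := hX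
  have hle := hrange ▸ range_toLin'_le_eigenspace_one (isIdempotentElem_columnProjection hXX) J₀
  refine ⟨fun y => ?_, hfinrank.symm.le.trans (Submodule.finrank_mono hle), fun hJ₀ => ?_⟩
  · have hy := hle ⟨y, rfl⟩
    rwa [Module.End.mem_eigenspace_iff, one_smul, toLin'_apply, toLin'_apply] at hy
  have hkey := fun μ => eq_one_or_norm_lt_one_of_hasEigenvalue_map_ofReal (μ := μ)
    (isStarProjection_columnProjection hXX) hJ₀
  refine ⟨fun μ hμ1 hμ => (hkey μ hμ).resolve_left hμ1, ?_, fun μ hμ => ?_⟩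
  · rw [eigenspace_toLin'_one_eq_range (isIdempotentElem_columnProjection hXX) hJ₀, hrange,
      hfinrank]
  · rcases hkey μ hμ with rfl | h
    · simp
    · exact h.le

/-- paper's Lemma 2: for `X ∈ ℝ^{n₀×n}` of rank `n ≤ n₀`,
`P = X(XᵀX)⁻¹Xᵀ`, and `J_∞ = J₀(I − P) + P`:
(i) every vector in the column space of `X` is fixed by `J_∞`, so `1` is an eigenvalue of
geometric multiplicity at least `n`; (ii) if `‖J₀‖_op < 1` then every complex eigenvalue
`λ ≠ 1` of `J_∞` satisfies `|λ| < 1`, the multiplicity of the eigenvalue `1` is exactly `n`,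
and `1` is the largest eigenvalue norm. -/
theorem jacobian_eigenvalue_one_linear (n₀ n : ℕ) (hn : n ≤ n₀)
    (X : Matrix (Fin n₀) (Fin n) ℝ) (hX : X.rank = n)
    (J₀ : Matrix (Fin n₀) (Fin n₀) ℝ) :
    ∀ P Jinf : Matrix (Fin n₀) (Fin n₀) ℝ,
      P = X * (Xᵀ * X)⁻¹ * Xᵀ →
      Jinf = J₀ * (1 - P) + P →
      ((∀ y : Fin n → ℝ, Jinf *ᵥ (X *ᵥ y) = X *ᵥ y) ∧
        n ≤ Module.finrank ℝ
          (Module.End.eigenspace (Matrix.toLin' Jinf) (1 : ℝ)) ∧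
        (‖J₀‖ < 1 →
          (∀ μ : ℂ, μ ≠ 1 →
            Module.End.HasEigenvalue
              (Matrix.toLin' (Jinf.map (Complex.ofReal : ℝ → ℂ))) μ → ‖μ‖ < 1) ∧
          Module.finrank ℝ
            (Module.End.eigenspace (Matrix.toLin' Jinf) (1 : ℝ)) = n ∧
          (∀ μ : ℂ,
            Module.End.HasEigenvalue
              (Matrix.toLin' (Jinf.map (Complex.ofReal : ℝ → ℂ))) μ → ‖μ‖ ≤ 1))) :=
  jacobian_eigenvalue_one_linear_general n₀ n X hX J₀
end

section
/- Let X ∈ ℝ^{k×m} be a full-rank matrix with k ≥ m ≥ 2, let c > 0, and let B = 1ₘ1ₘᵀ be the m×m all-ones matrix. Then XᵀX + cB is invertible and the real symmetric matrix M = X(XᵀX + cB)⁻¹Xᵀ has eigenvalue 1 with multiplicity m − 1, eigenvalue 0 with multiplicity k − m, and one further eigenvalue λ satisfying 0 < λ < 1. -/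
open Matrix

/-- paper's Lemma A.2: for full-rank `X ∈ ℝ^{k×m}` with `k ≥ m ≥ 2`, `c > 0`
and `B = 1ₘ1ₘᵀ`, the matrix `XᵀX + cB` is invertible and `M = X(XᵀX + cB)⁻¹Xᵀ` has eigenvalue
`1` with multiplicity `m − 1`, eigenvalue `0` with multiplicity `k − m`, and one further
eigenvalue `λ` with `0 < λ < 1` (of multiplicity `1`). -/
theorem spectrum_of_projection_like_matrix (k m : ℕ) (hm : 2 ≤ m) (hk : m ≤ k)
    (X : Matrix (Fin k) (Fin m) ℝ) (hX : X.rank = m)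
    (c : ℝ) (hc : 0 < c) :
    ∀ (B : Matrix (Fin m) (Fin m) ℝ) (M : Matrix (Fin k) (Fin k) ℝ),
      B = Matrix.of (fun _ _ => (1 : ℝ)) →
      M = X * (Xᵀ * X + c • B)⁻¹ * Xᵀ →
      (IsUnit (Xᵀ * X + c • B).det ∧
        ∃ lam : ℝ, 0 < lam ∧ lam < 1 ∧
          Module.finrank ℝ (Module.End.eigenspace (Matrix.toLin' M) (1 : ℝ)) = m - 1 ∧
          Module.finrank ℝ (Module.End.eigenspace (Matrix.toLin' M) (0 : ℝ)) = k - m ∧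
          Module.finrank ℝ (Module.End.eigenspace (Matrix.toLin' M) lam) = 1) := by
  intro B M hB hM
  subst hB hM
  set ones : Fin m → ℝ := fun _ => (1 : ℝ) with hones
  set B : Matrix (Fin m) (Fin m) ℝ := Matrix.of (fun _ _ => (1 : ℝ)) with hBdef
  set P : Matrix (Fin m) (Fin m) ℝ := Xᵀ * X + c • B with hPdef
  -- `B *ᵥ v` formula
  have hBv : ∀ v : Fin m → ℝ, B *ᵥ v = (∑ j, v j) • ones := by
    intro v; ext i; simp [B, mulVec, dotProduct, ones]
  -- quadratic form of `P`
  have hquad : ∀ v : Fin m → ℝ,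
      v ⬝ᵥ (P *ᵥ v) = (X *ᵥ v) ⬝ᵥ (X *ᵥ v) + c * (∑ j, v j) ^ 2 := by
    intro v
    have h1 : P *ᵥ v = Xᵀ *ᵥ (X *ᵥ v) + c • (B *ᵥ v) := by
      rw [hPdef, add_mulVec, smul_mulVec, mulVec_mulVec]
    rw [h1, dotProduct_add, dotProduct_mulVec, vecMul_transpose, dotProduct_smul, hBv,
      dotProduct_smul, smul_eq_mul, smul_eq_mul]
    have : v ⬝ᵥ ones = ∑ j, v j := by simp [dotProduct, ones]
    rw [this]; ring
  -- `X` is injective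
  have hXinj : Function.Injective X.mulVecLin := by
    rw [← LinearMap.ker_eq_bot]
    have h1 := LinearMap.finrank_range_add_finrank_ker X.mulVecLin
    have h2 : Module.finrank ℝ (LinearMap.range X.mulVecLin) = m := hX
    rw [h2, Module.finrank_fin_fun] at h1
    have h3 : Module.finrank ℝ (LinearMap.ker X.mulVecLin) = 0 := by omega
    exact Submodule.finrank_eq_zero.mp h3
  have hXne : ∀ w : Fin m → ℝ, X *ᵥ w = 0 → w = 0 := by
    intro w hw
    have := hXinj (a₁ := w) (a₂ := 0) (by simpa [Matrix.mulVecLin_apply] using hw)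
    exact this
  have hXinj' : ∀ w w' : Fin m → ℝ, X *ᵥ w = X *ᵥ w' → w = w' := by
    intro w w' hww
    exact hXinj (by simpa [Matrix.mulVecLin_apply] using hww)
  -- dot product of a vector with itself is nonneg
  have hdnn : ∀ (n : ℕ) (v : Fin n → ℝ), 0 ≤ v ⬝ᵥ v := by
    intro n v
    exact Finset.sum_nonneg fun i _ => mul_self_nonneg (v i)
  -- determinant of P is a unit
  have hdet : IsUnit P.det := by
    rw [isUnit_iff_ne_zero]
    intro h0
    obtain ⟨v, hv, hPv⟩ := Matrix.exists_mulVec_eq_zero_iff.mpr h0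
    have hz : v ⬝ᵥ (P *ᵥ v) = 0 := by rw [hPv, dotProduct_zero]
    rw [hquad v] at hz
    have hXv : X *ᵥ v ≠ 0 := fun h => hv (hXne v h)
    have h1 : 0 < (X *ᵥ v) ⬝ᵥ (X *ᵥ v) := by
      rcases lt_or_eq_of_le (hdnn k (X *ᵥ v)) with h | h
      · exact h
      · exact absurd (dotProduct_self_eq_zero.mp h.symm) hXv
    have h2 : 0 ≤ c * (∑ j, v j) ^ 2 := by positivity
    linarith
  set S : Matrix (Fin m) (Fin m) ℝ := P⁻¹ with hSdef
  have hPS : P * S = 1 := Matrix.mul_nonsing_inv _ hdet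
  have hSP : S * P = 1 := Matrix.nonsing_inv_mul _ hdet
  have hScancel : ∀ v : Fin m → ℝ, P *ᵥ (S *ᵥ v) = v := by
    intro v; rw [mulVec_mulVec, hPS, one_mulVec]
  have hPcancel : ∀ v : Fin m → ℝ, S *ᵥ (P *ᵥ v) = v := by
    intro v; rw [mulVec_mulVec, hSP, one_mulVec]
  have hSinj : ∀ v : Fin m → ℝ, S *ᵥ v = 0 → v = 0 := by
    intro v hv
    have := hScancel v
    rw [hv, mulVec_zero] at this
    exact this.symm
  set u : Fin m → ℝ := S *ᵥ ones with hudef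
  have hu1 : P *ᵥ u = ones := hScancel ones
  have hu0 : u ≠ 0 := by
    intro h
    have := hu1
    rw [h, mulVec_zero] at this
    have : (0 : ℝ) = 1 := congrFun this ⟨0, by omega⟩
    norm_num at this
  set t : ℝ := ∑ j, u j with htdef
  have hXu0 : X *ᵥ u ≠ 0 := fun h => hu0 (hXne u h)
  have hq : 0 < (X *ᵥ u) ⬝ᵥ (X *ᵥ u) := by
    rcases lt_or_eq_of_le (hdnn k (X *ᵥ u)) with h | h
    · exact h
    · exact absurd (dotProduct_self_eq_zero.mp h.symm) hXu0
  have hteq : t = (X *ᵥ u) ⬝ᵥ (X *ᵥ u) + c * t ^ 2 := by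
    have h1 : u ⬝ᵥ (P *ᵥ u) = t := by
      rw [hu1]; simp [dotProduct, ones, htdef]
    have h2 := hquad u
    rw [h1, ← htdef] at h2
    exact h2
  have ht0 : 0 < t := by nlinarith
  have hct : c * t < 1 := by nlinarith
  set lam : ℝ := 1 - c * t with hlamdef
  have hlam0 : 0 < lam := by simp only [hlamdef]; linarith
  have hlam1 : lam < 1 := by simp only [hlamdef]; nlinarith
  set M : Matrix (Fin k) (Fin k) ℝ := X * P⁻¹ * Xᵀ with hMdef
  have hMv : ∀ v : Fin k → ℝ, M *ᵥ v = X *ᵥ (S *ᵥ (Xᵀ *ᵥ v)) := by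
    intro v
    rw [mulVec_mulVec, mulVec_mulVec, hMdef, hSdef, Matrix.mul_assoc]
  -- key formula for M on range of X
  have key : ∀ w : Fin m → ℝ, M *ᵥ (X *ᵥ w) = X *ᵥ (w - (c * ∑ j, w j) • u) := by
    intro w
    rw [hMv]
    have hA : Xᵀ *ᵥ (X *ᵥ w) = P *ᵥ w - (c * ∑ j, w j) • ones := by
      rw [mulVec_mulVec, hPdef, add_mulVec, smul_mulVec, hBv, smul_smul]
      abel
    rw [hA, mulVec_sub, hPcancel, Matrix.mulVec_smul]
  -- eigenspace membership criterion
  have hmem : ∀ (μ : ℝ) (v : Fin k → ℝ),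
      v ∈ Module.End.eigenspace (Matrix.toLin' M) μ ↔ M *ᵥ v = μ • v := by
    intro μ v
    rw [Module.End.mem_eigenspace_iff, Matrix.toLin'_apply]
  refine ⟨hdet, lam, hlam0, hlam1, ?_, ?_, ?_⟩
  · -- eigenvalue 1, multiplicity m - 1
    classical
    set l : (Fin m → ℝ) →ₗ[ℝ] ℝ := ∑ i, LinearMap.proj i with hldef
    have hl : ∀ w : Fin m → ℝ, l w = ∑ j, w j := by
      intro w; simp [hldef]
    have hE : Module.End.eigenspace (Matrix.toLin' M) (1 : ℝ) =
        Submodule.map X.mulVecLin (LinearMap.ker l) := by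
      ext v
      rw [hmem, one_smul]
      constructor
      · intro hv
        set w : Fin m → ℝ := S *ᵥ (Xᵀ *ᵥ v) with hwdef
        have hvX : v = X *ᵥ w := by rw [← hv, hMv]
        have h2 : X *ᵥ (w - (c * ∑ j, w j) • u) = X *ᵥ w := by
          rw [← key, ← hvX, hv]
        have h3 : w - (c * ∑ j, w j) • u = w := hXinj' _ _ h2
        have h4 : (c * ∑ j, w j) • u = 0 := sub_eq_self.mp h3
        have h5 : ∑ j, w j = 0 := by
          rcases smul_eq_zero.mp h4 with h | h
          · have := mul_eq_zero.mp h
            rcases this with h | h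
            · exact absurd h (ne_of_gt hc)
            · exact h
          · exact absurd h hu0
        refine Submodule.mem_map.mpr ⟨w, ?_, ?_⟩
        · rw [LinearMap.mem_ker, hl]; exact h5
        · rw [Matrix.mulVecLin_apply]; exact hvX.symm
      · intro hv
        obtain ⟨w, hw, rfl⟩ := Submodule.mem_map.mp hv
        rw [LinearMap.mem_ker, hl] at hw
        simp only [Matrix.mulVecLin_apply]
        rw [key, hw, mul_zero, zero_smul, sub_zero]
    rw [hE]
    have hrank : Module.finrank ℝ (Submodule.map X.mulVecLin (LinearMap.ker l)) =
        Module.finrank ℝ (LinearMap.ker l) :=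
      (LinearEquiv.finrank_eq (Submodule.equivMapOfInjective X.mulVecLin hXinj _)).symm
    rw [hrank]
    have hsurj : LinearMap.range l = ⊤ := by
      rw [LinearMap.range_eq_top]
      intro r
      refine ⟨r • (Pi.single (⟨0, by omega⟩ : Fin m) (1 : ℝ) : Fin m → ℝ), ?_⟩
      rw [_root_.map_smul, hl]
      simp
    have h1 := LinearMap.finrank_range_add_finrank_ker l
    rw [hsurj, Module.finrank_fin_fun, finrank_top, Module.finrank_self] at h1
    omega
  · -- eigenvalue 0, multiplicity k - m
    have hE : Module.End.eigenspace (Matrix.toLin' M) (0 : ℝ) =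
        LinearMap.ker Xᵀ.mulVecLin := by
      ext v
      rw [hmem, zero_smul, LinearMap.mem_ker, Matrix.mulVecLin_apply]
      constructor
      · intro hv
        rw [hMv] at hv
        exact hSinj _ (hXne _ hv)
      · intro hv
        rw [hMv, hv, mulVec_zero, mulVec_zero]
    rw [hE]
    have h1 := LinearMap.finrank_range_add_finrank_ker Xᵀ.mulVecLin
    have h2 : Module.finrank ℝ (LinearMap.range Xᵀ.mulVecLin) = m := by
      have : Xᵀ.rank = m := by rw [Matrix.rank_transpose, hX]
      exact this
    rw [h2, Module.finrank_fin_fun] at h1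
    omega
  · -- eigenvalue lam, multiplicity 1
    have hE : Module.End.eigenspace (Matrix.toLin' M) lam = ℝ ∙ (X *ᵥ u) := by
      ext v
      rw [hmem]
      constructor
      · intro hv
        have hlne : lam ≠ 0 := ne_of_gt hlam0
        have hvM : v = M *ᵥ (lam⁻¹ • v) := by
          rw [Matrix.mulVec_smul, hv, smul_smul, inv_mul_cancel₀ hlne, one_smul]
        set w : Fin m → ℝ := S *ᵥ (Xᵀ *ᵥ (lam⁻¹ • v)) with hwdef
        have hvX : v = X *ᵥ w := by rw [hvM, hMv]
        have h2 : X *ᵥ (w - (c * ∑ j, w j) • u) = X *ᵥ (lam • w) := by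
          rw [← key, Matrix.mulVec_smul, ← hvX, hv]
        have h3 : w - (c * ∑ j, w j) • u = lam • w := hXinj' _ _ h2
        have h4 : (1 - lam) • w = (c * ∑ j, w j) • u := by
          linear_combination (norm := module) h3
        have hct0 : (1 - lam) ≠ 0 := by
          simp only [hlamdef]
          intro h
          have : c * t = 0 := by linarith
          nlinarith
        have h5 : w = ((1 - lam)⁻¹ * (c * ∑ j, w j)) • u := by
          rw [mul_smul, ← h4, smul_smul, inv_mul_cancel₀ hct0, one_smul]
        rw [Submodule.mem_span_singleton]
        refine ⟨(1 - lam)⁻¹ * (c * ∑ j, w j), ?_⟩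
        rw [hvX]
        conv_rhs => rw [h5]
        rw [Matrix.mulVec_smul]
      · intro hv
        rw [Submodule.mem_span_singleton] at hv
        obtain ⟨a, rfl⟩ := hv
        have heig : M *ᵥ (X *ᵥ u) = lam • (X *ᵥ u) := by
          rw [key]
          have h7 : u - (c * ∑ j, u j) • u = lam • u := by
            rw [← htdef, hlamdef]
            funext j
            simp only [Pi.sub_apply, Pi.smul_apply, smul_eq_mul]
            ring
          rw [h7, Matrix.mulVec_smul]
        rw [Matrix.mulVec_smul, heig, smul_smul, smul_smul, mul_comm]
    rw [hE]
    exact finrank_span_singleton hXu0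
end

section
/- Let X ∈ ℝ^{k×m} be a full-rank matrix with k ≥ m ≥ 2, let c > 0, let B = 1ₘ1ₘᵀ be the m×m all-ones matrix, let g = trace(B(XᵀX)⁻¹) and λ = 1/(1 + cg). Then X(XᵀX + cB)⁻¹1ₘ = λ · X(XᵀX)⁻¹1ₘ, and the vector X(XᵀX)⁻¹1ₘ is an eigenvector of the matrix X(XᵀX + cB)⁻¹Xᵀ with eigenvalue λ. -/
/-!
With `A = XᵀX`, positive definite because `X` has full column rank, `cB = 1(c·1)ᵀ` is a rank-one
update of `A`. Since `g = 1ᵀA⁻¹1 > 0`, Sherman–Morrison applies and gives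
`(A + cB)⁻¹1 = λ A⁻¹1`; multiplying by `X` is the first claim. As `Xᵀ(XA⁻¹1) = 1`, applying
`X(A + cB)⁻¹Xᵀ` to `XA⁻¹1` reduces to the first claim, and `XA⁻¹1 ≠ 0` for the same reason.
-/

open Matrix

namespace Matrix

variable {K : Type*} [Field K] {m n : Type*} [Fintype n]

theorem mulVec_injective_of_rank_eq_card {A : Matrix m n K} (hA : A.rank = Fintype.card n) :
    Function.Injective A.mulVec := by
  have hker : Module.finrank K (LinearMap.ker A.mulVecLin) = 0 := by
    have := LinearMap.finrank_range_add_finrank_ker A.mulVecLin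
    rw [← Matrix.rank, hA, Module.finrank_fintype_fun_eq_card] at this
    omega
  exact LinearMap.ker_eq_bot.mp (Submodule.finrank_eq_zero.mp hker)

theorem posDef_transpose_mul_self_of_rank_eq_card [Fintype m] {A : Matrix m n ℝ}
    (hA : A.rank = Fintype.card n) : (Aᵀ * A).PosDef := by
  simpa [conjTranspose_eq_transpose_of_trivial] using
    PosDef.conjTranspose_mul_self A (mulVec_injective_of_rank_eq_card hA)

theorem trace_vecMulVec_mul (u v : n → K) (M : Matrix n n K) :
    (vecMulVec u v * M).trace = v ⬝ᵥ M *ᵥ u := by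
  rw [vecMulVec_mul, trace_vecMulVec, dotProduct_comm, dotProduct_mulVec]

variable [DecidableEq n]

theorem isUnit_det_add_vecMulVec {A : Matrix n n K} (hA : IsUnit A.det) (u v : n → K)
    (h : 1 + v ⬝ᵥ A⁻¹ *ᵥ u ≠ 0) : IsUnit (A + vecMulVec u v).det := by
  rw [vecMulVec_eq Unit, det_add_replicateCol_mul_replicateRow hA, Matrix.mul_assoc,
    ← replicateCol_mulVec, det_unique (1 + _), add_apply, one_apply_eq,
    replicateRow_mul_replicateCol_apply]
  exact hA.mul h.isUnit

/-- The Sherman–Morrison formula, applied to `u`. -/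
theorem inv_add_vecMulVec_mulVec {A : Matrix n n K} (hA : IsUnit A.det) (u v : n → K)
    (h : 1 + v ⬝ᵥ A⁻¹ *ᵥ u ≠ 0) :
    (A + vecMulVec u v)⁻¹ *ᵥ u = (1 + v ⬝ᵥ A⁻¹ *ᵥ u)⁻¹ • A⁻¹ *ᵥ u := by
  have hS := isUnit_det_add_vecMulVec hA u v h
  have key : (A + vecMulVec u v) *ᵥ (A⁻¹ *ᵥ u) = (1 + v ⬝ᵥ A⁻¹ *ᵥ u) • u := by
    rw [add_mulVec, mulVec_mulVec, mul_nonsing_inv A hA, one_mulVec, vecMulVec_mulVec,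
      op_smul_eq_smul, add_smul, one_smul]
  have hinv : A⁻¹ *ᵥ u = (1 + v ⬝ᵥ A⁻¹ *ᵥ u) • (A + vecMulVec u v)⁻¹ *ᵥ u := by
    rw [← mulVec_smul, ← key, mulVec_mulVec, nonsing_inv_mul _ hS, one_mulVec]
  exact ((inv_smul_eq_iff₀ h).mpr hinv).symm

end Matrix

theorem eigenvector_of_projection_like_matrix_general (k m : ℕ) (hm : 2 ≤ m)
    (X : Matrix (Fin k) (Fin m) ℝ) (hX : X.rank = m)
    (c : ℝ) (hc : 0 < c) :
    ∀ (B : Matrix (Fin m) (Fin m) ℝ) (g lam : ℝ),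
      B = Matrix.of (fun _ _ => (1 : ℝ)) →
      g = (B * (Xᵀ * X)⁻¹).trace →
      lam = 1 / (1 + c * g) →
      ((X * (Xᵀ * X + c • B)⁻¹) *ᵥ (fun _ => (1 : ℝ)) =
          lam • ((X * (Xᵀ * X)⁻¹) *ᵥ (fun _ => (1 : ℝ))) ∧
        Module.End.HasEigenvector (Matrix.toLin' (X * (Xᵀ * X + c • B)⁻¹ * Xᵀ)) lam
          ((X * (Xᵀ * X)⁻¹) *ᵥ (fun _ => (1 : ℝ)))) := by
  rintro B g lam rfl hg rfl
  set u : Fin m → ℝ := fun _ => 1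
  set A := Xᵀ * X
  have hA : A.PosDef := posDef_transpose_mul_self_of_rank_eq_card (by simpa using hX)
  have hdetA : IsUnit A.det := (isUnit_iff_isUnit_det A).mp hA.isUnit
  have hu : u ≠ 0 := fun h => by simpa [u] using congrFun h ⟨0, by omega⟩
  have hB : (of fun _ _ => (1 : ℝ)) = vecMulVec u u := by ext; simp [u, vecMulVec]
  rw [hB, trace_vecMulVec_mul] at hg
  have hgpos : 0 < g := hg ▸ by simpa using hA.inv.dotProduct_mulVec_pos hu
  have hcol :
      (X * (A + c • vecMulVec u u)⁻¹) *ᵥ u = (1 / (1 + c * g)) • (X * A⁻¹) *ᵥ u := by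
    rw [← mulVec_mulVec, ← vecMulVec_smul, inv_add_vecMulVec_mulVec hdetA u (c • u)
      (by rw [smul_dotProduct, ← hg]; positivity), mulVec_smul, mulVec_mulVec, smul_dotProduct,
      ← hg, one_div, smul_eq_mul]
  have hXt : Xᵀ *ᵥ (X * A⁻¹) *ᵥ u = u := by
    rw [mulVec_mulVec, ← Matrix.mul_assoc, mul_nonsing_inv _ hdetA, one_mulVec]
  rw [hB]
  refine ⟨hcol, ?_, fun h => hu ?_⟩
  · rw [Module.End.mem_eigenspace_iff, toLin'_apply, ← mulVec_mulVec, hXt, hcol]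
  · rw [← hXt, h, mulVec_zero]

/-- paper's Corollary A.1: for full-rank `X ∈ ℝ^{k×m}` with `k ≥ m ≥ 2`,
`c > 0`, `B = 1ₘ1ₘᵀ`, `g = trace(B(XᵀX)⁻¹)` and `λ = 1/(1 + cg)`, one has
`X(XᵀX + cB)⁻¹1ₘ = λ · X(XᵀX)⁻¹1ₘ`, and `X(XᵀX)⁻¹1ₘ` is an eigenvector of
`X(XᵀX + cB)⁻¹Xᵀ` with eigenvalue `λ`. -/
theorem eigenvector_of_projection_like_matrix (k m : ℕ) (hm : 2 ≤ m) (hk : m ≤ k)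
    (X : Matrix (Fin k) (Fin m) ℝ) (hX : X.rank = m)
    (c : ℝ) (hc : 0 < c) :
    ∀ (B : Matrix (Fin m) (Fin m) ℝ) (g lam : ℝ),
      B = Matrix.of (fun _ _ => (1 : ℝ)) →
      g = (B * (Xᵀ * X)⁻¹).trace →
      lam = 1 / (1 + c * g) →
      ((X * (Xᵀ * X + c • B)⁻¹) *ᵥ (fun _ => (1 : ℝ)) =
          lam • ((X * (Xᵀ * X)⁻¹) *ᵥ (fun _ => (1 : ℝ))) ∧
        Module.End.HasEigenvector (Matrix.toLin' (X * (Xᵀ * X + c • B)⁻¹ * Xᵀ)) lam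
          ((X * (Xᵀ * X)⁻¹) *ᵥ (fun _ => (1 : ℝ)))) :=
  eigenvector_of_projection_like_matrix_general k m hm X hX c hc
end

section
/- Let X ∈ ℝ^{k×m} be a full-rank matrix with k ≥ m ≥ 2, let c ≥ 0, and let B = 1ₘ1ₘᵀ be the m×m all-ones matrix. Then the operator norm (spectral norm) of X(XᵀX + cB)⁻¹Xᵀ equals 1. -/
open Matrix
open scoped Matrix.Norms.L2Operator

/-!
Write `M = XᵀX + cB` and `P = X M⁻¹ Xᵀ`; `M` is positive definite because `X` is injective.
For any `x`, put `y = M⁻¹ Xᵀ x`, so `P x = X y`; then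
`‖P x‖² = yᵀXᵀXy ≤ yᵀMy = ⟪x, P x⟫ ≤ ‖x‖ ‖P x‖`, whence `‖P‖ ≤ 1`.
Conversely, a nonzero `z` with coordinate sum `0` satisfies `Bz = 0`, so `Mz = XᵀXz` and
`P (X z) = X z` with `X z ≠ 0`, whence `‖P‖ ≥ 1`.
-/

theorem Matrix.mulVec_injective_of_rank_eq_card_s5 {m n K : Type*} [Fintype n] [Field K]
    {A : Matrix m n K} (h : A.rank = Fintype.card n) : Function.Injective A.mulVec := by
  rw [mulVec_injective_iff, linearIndependent_iff_card_eq_finrank_span, ← h,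
    rank_eq_finrank_span_cols]
  rfl

theorem Fintype.exists_ne_zero_sum_eq_zero {n R : Type*} [Fintype n] [DecidableEq n] [Ring R]
    [Nontrivial R] (h : 1 < Fintype.card n) : ∃ z : n → R, z ≠ 0 ∧ ∑ i, z i = 0 := by
  obtain ⟨i, j, hij⟩ := Fintype.exists_pair_of_one_lt_card h
  refine ⟨Pi.single i 1 - Pi.single j 1, fun hz => ?_, by simp [Finset.sum_sub_distrib]⟩
  simpa [hij] using congrFun hz i

theorem norm_le_of_norm_sq_le_inner {E : Type*} [NormedAddCommGroup E] [InnerProductSpace ℝ E]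
    {x y : E} (h : ‖y‖ ^ 2 ≤ inner ℝ x y) : ‖y‖ ≤ ‖x‖ := by
  have := h.trans (real_inner_le_norm x y)
  nlinarith [norm_nonneg x, norm_nonneg y]

namespace Matrix

variable {ι n : Type*} [Fintype ι] [Fintype n]

theorem one_le_l2_opNorm_of_mulVec_eq_self {𝕜 : Type*} [RCLike 𝕜] [DecidableEq ι]
    (P : Matrix ι ι 𝕜) {u : ι → 𝕜} (hu : u ≠ 0) (hPu : P *ᵥ u = u) : 1 ≤ ‖P‖ := by
  have hle := P.l2_opNorm_mulVec (WithLp.toLp 2 u)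
  have hpos : 0 < ‖WithLp.toLp 2 u‖ := by simpa using hu
  rw [hPu] at hle
  exact (le_mul_iff_one_le_left hpos).mp hle

theorem mul_inv_mul_transpose_mulVec_mulVec {R : Type*} [CommRing R] [DecidableEq n]
    {X : Matrix ι n R} {M : Matrix n n R} (hM : IsUnit M) {z : n → R}
    (hz : M *ᵥ z = (Xᵀ * X) *ᵥ z) : (X * M⁻¹ * Xᵀ) *ᵥ (X *ᵥ z) = X *ᵥ z := by
  calc (X * M⁻¹ * Xᵀ) *ᵥ (X *ᵥ z) = X *ᵥ (M⁻¹ *ᵥ ((Xᵀ * X) *ᵥ z)) := by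
        simp only [mulVec_mulVec, Matrix.mul_assoc]
    _ = X *ᵥ z := by
        rw [← hz, mulVec_mulVec z (M⁻¹ : Matrix n n R),
          nonsing_inv_mul _ ((isUnit_iff_isUnit_det M).mp hM), one_mulVec]

section Real

variable [DecidableEq n] {X : Matrix ι n ℝ} {M : Matrix n n ℝ}

theorem dotProduct_mul_inv_mul_transpose_mulVec_le (hM : IsUnit M)
    (hXM : (M - Xᵀ * X).PosSemidef) (x : ι → ℝ) :
    ((X * M⁻¹ * Xᵀ) *ᵥ x) ⬝ᵥ ((X * M⁻¹ * Xᵀ) *ᵥ x) ≤ x ⬝ᵥ ((X * M⁻¹ * Xᵀ) *ᵥ x) := by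
  set y := M⁻¹ *ᵥ (Xᵀ *ᵥ x)
  have hPx : (X * M⁻¹ * Xᵀ) *ᵥ x = X *ᵥ y := by simp only [y, mulVec_mulVec, Matrix.mul_assoc]
  have hMy : M *ᵥ y = Xᵀ *ᵥ x := by
    rw [mulVec_mulVec, mul_nonsing_inv _ ((isUnit_iff_isUnit_det M).mp hM), one_mulVec]
  have hgap : 0 ≤ y ⬝ᵥ ((M - Xᵀ * X) *ᵥ y) := by
    simpa using hXM.dotProduct_mulVec_nonneg y
  rw [hPx]
  calc (X *ᵥ y) ⬝ᵥ (X *ᵥ y) = y ⬝ᵥ ((Xᵀ * X) *ᵥ y) := by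
        rw [← mulVec_mulVec, dotProduct_mulVec y Xᵀ, vecMul_transpose]
    _ ≤ y ⬝ᵥ (M *ᵥ y) := by
        rw [sub_mulVec, dotProduct_sub] at hgap
        linarith
    _ = x ⬝ᵥ (X *ᵥ y) := by
        rw [hMy, dotProduct_mulVec, vecMul_transpose, dotProduct_comm]

variable [DecidableEq ι]

theorem l2_opNorm_le_one_of_dotProduct_mulVec_le (P : Matrix ι ι ℝ)
    (h : ∀ x, (P *ᵥ x) ⬝ᵥ (P *ᵥ x) ≤ x ⬝ᵥ (P *ᵥ x)) : ‖P‖ ≤ 1 := by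
  rw [l2_opNorm_def]
  refine ContinuousLinearMap.opNorm_le_bound _ zero_le_one fun x => ?_
  rw [one_mul]
  apply norm_le_of_norm_sq_le_inner
  rw [← real_inner_self_eq_norm_sq, EuclideanSpace.inner_eq_star_dotProduct,
    EuclideanSpace.inner_eq_star_dotProduct]
  simpa [dotProduct_comm _ x.ofLp] using h x.ofLp

theorem l2_opNorm_mul_inv_mul_transpose_le_one (hM : IsUnit M)
    (hXM : (M - Xᵀ * X).PosSemidef) : ‖X * M⁻¹ * Xᵀ‖ ≤ 1 :=
  l2_opNorm_le_one_of_dotProduct_mulVec_le _ (dotProduct_mul_inv_mul_transpose_mulVec_le hM hXM)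

theorem one_le_l2_opNorm_mul_inv_mul_transpose (hM : IsUnit M) {z : n → ℝ}
    (hXz : X *ᵥ z ≠ 0) (hz : M *ᵥ z = (Xᵀ * X) *ᵥ z) : 1 ≤ ‖X * M⁻¹ * Xᵀ‖ :=
  one_le_l2_opNorm_of_mulVec_eq_self _ hXz (mul_inv_mul_transpose_mulVec_mulVec hM hz)

end Real

end Matrix

theorem opNorm_projection_like_matrix_general (k m : ℕ) (hm : 2 ≤ m)
    (X : Matrix (Fin k) (Fin m) ℝ) (hX : X.rank = m)
    (c : ℝ) (hc : 0 ≤ c) :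
    ∀ B : Matrix (Fin m) (Fin m) ℝ,
      B = Matrix.of (fun _ _ => (1 : ℝ)) →
      ‖X * (Xᵀ * X + c • B)⁻¹ * Xᵀ‖ = 1 := by
  rintro B rfl
  have hB : (of fun _ _ => 1 : Matrix (Fin m) (Fin m) ℝ) = vecMulVec 1 1 := by
    ext; simp [vecMulVec]
  rw [hB]
  have hinj : Function.Injective X.mulVec :=
    X.mulVec_injective_of_rank_eq_card_s5 (by simpa using hX)
  have hcB : (c • vecMulVec (1 : Fin m → ℝ) 1).PosSemidef := by
    simpa using (posSemidef_vecMulVec_self_star (1 : Fin m → ℝ)).smul hc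
  have hM : IsUnit (Xᵀ * X + c • vecMulVec (1 : Fin m → ℝ) 1) := by
    simpa using ((PosDef.conjTranspose_mul_self X hinj).add_posSemidef hcB).isUnit
  obtain ⟨z, hz, hsum⟩ := Fintype.exists_ne_zero_sum_eq_zero (R := ℝ) (n := Fin m) (by simpa)
  refine le_antisymm (l2_opNorm_mul_inv_mul_transpose_le_one hM (by simpa using hcB))
    (one_le_l2_opNorm_mul_inv_mul_transpose hM (by simpa using hinj.ne hz) ?_)
  rw [add_mulVec, smul_mulVec, vecMulVec_mulVec, one_dotProduct, hsum]
  simp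

/-- paper's Corollary A.2: for full-rank `X ∈ ℝ^{k×m}` with `k ≥ m ≥ 2`,
`c ≥ 0` and `B = 1ₘ1ₘᵀ`, the spectral norm of `X(XᵀX + cB)⁻¹Xᵀ` equals `1`. -/
theorem opNorm_projection_like_matrix (k m : ℕ) (hm : 2 ≤ m) (hk : m ≤ k)
    (X : Matrix (Fin k) (Fin m) ℝ) (hX : X.rank = m)
    (c : ℝ) (hc : 0 ≤ c) :
    ∀ B : Matrix (Fin m) (Fin m) ℝ,
      B = Matrix.of (fun _ _ => (1 : ℝ)) →
      ‖X * (Xᵀ * X + c • B)⁻¹ * Xᵀ‖ = 1 :=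
  opNorm_projection_like_matrix_general k m hm X hX c hc
end

section
/- Let σ(x) = 1/(1 + e^{−x}) be the logistic sigmoid and let q ≥ 0. Then the second moment of σ under the centered Gaussian distribution of variance q satisfies ∫_ℝ σ(x)² dN(0,q)(x) ≥ 1/4. (This is the key step of the paper's Lemma B.1, which gives the lower bound Θ_∞^{(L)}(x,x) ≥ 1/4 on the diagonal of the NTK of a sigmoid network.) -/
/-! Since `σ(-x) = 1 - σ(x)`, we have `σ(x)² + σ(-x)² ≥ 1/2` for every `x`. The centered
Gaussian is invariant under `x ↦ -x`, so `∫ σ² = ∫ σ(-x)²`, and averaging the two integrals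
gives `∫ σ² ≥ 1/4`. -/

open MeasureTheory ProbabilityTheory

instance ProbabilityTheory.isNegInvariant_gaussianReal_zero (v : NNReal) :
    (gaussianReal 0 v).IsNegInvariant :=
  ⟨by simpa [Measure.neg_def] using gaussianReal_map_neg (μ := 0) (v := v)⟩

theorem MeasureTheory.half_le_integral_of_le_add_comp_neg {G : Type*} [MeasurableSpace G]
    [AddGroup G] [MeasurableNeg G] {μ : Measure G} [IsProbabilityMeasure μ] [μ.IsNegInvariant]
    {f : G → ℝ} (hf : Integrable f μ) {c : ℝ} (hc : ∀ x, c ≤ f x + f (-x)) :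
    c / 2 ≤ ∫ x, f x ∂μ := by
  have h : c ≤ ∫ x, (f x + f (-x)) ∂μ := by
    simpa using integral_mono (integrable_const c) (hf.add hf.comp_neg) hc
  rw [integral_add hf hf.comp_neg, integral_neg_eq_self] at h
  linarith

namespace Real

theorem one_div_one_add_exp_neg (x : ℝ) : 1 / (1 + exp (-x)) = sigmoid x :=
  (one_div _).trans (sigmoid_def x).symm

theorem one_half_le_sigmoid_sq_add_sigmoid_neg_sq (x : ℝ) :
    1 / 2 ≤ sigmoid x ^ 2 + sigmoid (-x) ^ 2 := by
  rw [sigmoid_neg]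
  nlinarith [sq_nonneg (2 * sigmoid x - 1)]

theorem integrable_sigmoid_sq {μ : Measure ℝ} [IsFiniteMeasure μ] :
    Integrable (fun x ↦ sigmoid x ^ 2) μ :=
  Integrable.of_bound (continuous_sigmoid.pow 2).aestronglyMeasurable 1 <|
    .of_forall fun x ↦ by
      rw [norm_of_nonneg (by positivity)]
      exact pow_le_one₀ (sigmoid_nonneg x) (sigmoid_le_one x)

end Real

/-- key step of the paper's Lemma B.1: the second moment of the logistic
sigmoid `σ(x) = 1/(1 + e^{−x})` under a centered Gaussian of variance `q ≥ 0` is at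
least `1/4`. -/
theorem sigmoid_sq_gaussian_moment_ge (q : NNReal) :
    (1 / 4 : ℝ) ≤ ∫ x, (1 / (1 + Real.exp (-x))) ^ 2 ∂(gaussianReal 0 q) := by
  simp only [Real.one_div_one_add_exp_neg]
  linarith [half_le_integral_of_le_add_comp_neg (μ := gaussianReal 0 q)
    Real.integrable_sigmoid_sq Real.one_half_le_sigmoid_sq_add_sigmoid_neg_sq]
end

section
/- Fix n₀ > 0 and define for r > 0 the diagonal NTK entry K(r) = 1/4 + (1/(2π))·arcsin(r²/(r² + 2n₀)) + (1/(2π))·r²/√((2n₀ + r²)² − r⁴). Then lim_{r→∞} K(r)/r = 1/(4π√n₀). (This is the paper's claim that the diagonal entries of the trained kernel matrix K̃ grow like r/(4π√n₀) for large input radius r.) -/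
/-!
Since `(2n₀ + r²)² − r⁴ = 4n₀(r² + n₀)`, the last term of `K(r)` equals
`(1/(4π√n₀)) · r · (r / √(r² + n₀))`, and `r / √(r² + n₀) → 1`. The first two terms stay
bounded (they tend to `1/4 + arcsin 1 / (2π)`), so they vanish after division by `r`.
-/

open Filter Real

theorem tendsto_sq_div_sq_add_const_atTop (c : ℝ) :
    Tendsto (fun r : ℝ => r ^ 2 / (r ^ 2 + c)) atTop (nhds 1) := by
  have hden : Tendsto (fun r : ℝ => r ^ 2 + c) atTop atTop :=
    (tendsto_pow_atTop two_ne_zero).atTop_add tendsto_const_nhds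
  have hlim : Tendsto (fun r : ℝ => 1 - c / (r ^ 2 + c)) atTop (nhds (1 - 0)) :=
    tendsto_const_nhds.sub (tendsto_const_nhds.div_atTop hden)
  rw [sub_zero] at hlim
  refine hlim.congr' ?_
  filter_upwards [hden.eventually_gt_atTop 0] with r hr
  field_simp
  ring

theorem tendsto_div_sqrt_sq_add_const_atTop (c : ℝ) :
    Tendsto (fun r : ℝ => r / √(r ^ 2 + c)) atTop (nhds 1) := by
  have hlim := (continuous_sqrt.tendsto 1).comp (tendsto_sq_div_sq_add_const_atTop c)
  rw [sqrt_one] at hlim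
  refine hlim.congr' ?_
  filter_upwards [eventually_ge_atTop 0] with r hr
  rw [Function.comp_apply, sqrt_div (sq_nonneg r), sqrt_sq hr]

theorem sqrt_two_mul_add_sq_sq_sub_pow_four {a : ℝ} (ha : 0 ≤ a) (r : ℝ) :
    √((2 * a + r ^ 2) ^ 2 - r ^ 4) = 2 * √a * √(r ^ 2 + a) := by
  have hfactor : (2 * a + r ^ 2) ^ 2 - r ^ 4 = (2 * √a) ^ 2 * (r ^ 2 + a) := by
    rw [mul_pow, sq_sqrt ha]
    ring
  rw [hfactor, sqrt_mul (by positivity), sqrt_sq (by positivity)]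

/-- the diagonal NTK entry
`K(r) = 1/4 + (1/(2π))·arcsin(r²/(r² + 2n₀)) + (1/(2π))·r²/√((2n₀ + r²)² − r⁴)`
satisfies `K(r)/r → 1/(4π√n₀)` as `r → ∞`. -/
theorem diagonal_ntk_growth (n₀ : ℝ) (hn₀ : 0 < n₀) :
    Tendsto
      (fun r : ℝ =>
        (1 / 4 + (1 / (2 * π)) * arcsin (r ^ 2 / (r ^ 2 + 2 * n₀))
            + (1 / (2 * π)) * (r ^ 2 / Real.sqrt ((2 * n₀ + r ^ 2) ^ 2 - r ^ 4))) / r)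
      atTop (nhds (1 / (4 * π * Real.sqrt n₀))) := by
  have hsplit : ∀ᶠ r : ℝ in atTop,
      (1 / 4 + (1 / (2 * π)) * arcsin (r ^ 2 / (r ^ 2 + 2 * n₀))
          + (1 / (2 * π)) * (r ^ 2 / √((2 * n₀ + r ^ 2) ^ 2 - r ^ 4))) / r
      = (1 / 4 + (1 / (2 * π)) * arcsin (r ^ 2 / (r ^ 2 + 2 * n₀))) / r
        + 1 / (4 * π * √n₀) * (r / √(r ^ 2 + n₀)) := by
    filter_upwards [eventually_gt_atTop 0] with r hr
    have : 0 < √(r ^ 2 + n₀) := sqrt_pos.mpr (by positivity)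
    have : 0 < √n₀ := sqrt_pos.mpr hn₀
    rw [sqrt_two_mul_add_sq_sq_sub_pow_four hn₀.le]
    field_simp
    ring
  have hhead : Tendsto (fun r : ℝ => 1 / 4 + (1 / (2 * π)) * arcsin (r ^ 2 / (r ^ 2 + 2 * n₀)))
      atTop (nhds (1 / 4 + (1 / (2 * π)) * arcsin 1)) :=
    tendsto_const_nhds.add <| ((continuous_arcsin.tendsto 1).comp
      (tendsto_sq_div_sq_add_const_atTop (2 * n₀))).const_mul _
  have hlim := (hhead.div_atTop tendsto_id).add
    ((tendsto_div_sqrt_sq_add_const_atTop n₀).const_mul (1 / (4 * π * √n₀)))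
  rw [mul_one, zero_add] at hlim
  exact hlim.congr' (hsplit.mono fun _ h => h.symm)
end
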